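/- Separating linear forms via shuffles: let x_1, ..., x_n be elements of the range of the signature map (group-like elements of T((ℝ^d))) that are pairwise distinct. Then for each i there exists a linear form σ_i on T((ℝ^d)), given explicitly as a shuffle-polynomial in coordinate projections, such that σ_i(x_j) = δ_{ij} for all j = 1,...,n. -/

import Mathlib

/-!
On signatures the coordinate forms satisfy the shuffle identity
`π^u(x) π^v(x) = Σ_{w ∈ u ⧢ v} π^w(x)`: the iterated integrals are primitives of integrable
functions, hence absolutely continuous, and the identity follows by induction from integration by
parts. Consequently the vectors `(π^w(x_1), …, π^w(x_n)) ∈ ℝⁿ` span a unital subalgebra of `ℝⁿ`,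
which separates the indices since the `x_j` are distinct. Such a subalgebra contains each
indicator vector `e_i`, namely the product `∏_{j ≠ i} (a_{ij} + b_{ij} v_{ij})` with `v_{ij}` a
vector separating `i` from `j`; expanding `e_i = Σ c_w (π^w(x_j))_j` gives `σ_i = Σ c_w π^w`.
-/

open MeasureTheory Set

/-- Iterated integral of a path against its derivative; the head letter is integrated
outermost (so this corresponds to the reversed word). -/
noncomputable def iterInt {d : ℕ} (X : ℝ → Fin d → ℝ) (a : ℝ) : List (Fin d) → ℝ → ℝ
  | [], _ => 1
  | i :: I, b => ∫ u in a..b, iterInt X a I u * deriv (fun s => X s i) u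

/-- Coordinate iterated integral `π^I(S(X))` over `[a,b]` for the word `I = (i₁,…,iₙ)`
(innermost integration first). -/
noncomputable def sigCoord {d : ℕ} (X : ℝ → Fin d → ℝ) (a b : ℝ) (I : List (Fin d)) : ℝ :=
  iterInt X a I.reverse b

/-- The signature of a path over `[a,b]`, as the family of its coordinate iterated
integrals indexed by words; this represents an element of the tensor algebra `T((ℝ^d))`. -/
noncomputable def Sig {d : ℕ} (X : ℝ → Fin d → ℝ) (a b : ℝ) : List (Fin d) → ℝ :=
  fun I => sigCoord X a b I

/-- The product of the tensor algebra `T((ℝ^d))` in coordinates. -/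
noncomputable def tmul {d : ℕ} (x y : List (Fin d) → ℝ) : List (Fin d) → ℝ :=
  fun w => ∑ k ∈ Finset.range (w.length + 1), x (w.take k) * y (w.drop k)

/-- The unit of the tensor algebra. -/
def tunit {d : ℕ} : List (Fin d) → ℝ := fun w => if w = [] then 1 else 0

/-- The tensor exponential `exp(v) = Σ v^{⊗n}/n!` in coordinates. -/
noncomputable def texp {d : ℕ} (v : Fin d → ℝ) : List (Fin d) → ℝ :=
  fun w => (w.map v).prod / w.length.factorial

/-- The multiset of shuffles of two words. -/
def shuffles {α : Type*} : List α → List α → Multiset (List α)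
  | [], v => {v}
  | u, [] => {u}
  | a :: u, b :: v => ((shuffles u (b :: v)).map (a :: ·)) + ((shuffles (a :: u) v).map (b :: ·))
  termination_by u v => u.length + v.length

/-- `x` is in the range of the signature map on continuous bounded-variation paths. -/
def IsSignature {d : ℕ} (x : List (Fin d) → ℝ) : Prop :=
  ∃ (X : ℝ → Fin d → ℝ) (a b : ℝ), a ≤ b ∧ ContinuousOn X (Set.Icc a b) ∧
    BoundedVariationOn X (Set.Icc a b) ∧ x = Sig X a b

/-- Evaluation of a (finitely supported) linear form on `T((ℝ^d))`. -/
noncomputable def formEval {d : ℕ} (f : List (Fin d) →₀ ℝ) (x : List (Fin d) → ℝ) : ℝ :=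
  f.sum fun w c => c * x w

/-- The shuffle product of two linear forms, extended bilinearly from words. -/
noncomputable def shuffleForm {d : ℕ} (f g : List (Fin d) →₀ ℝ) : List (Fin d) →₀ ℝ :=
  f.sum fun u cu => g.sum fun v cv =>
    (cu * cv) • ((shuffles u v).map fun w => Finsupp.single w (1 : ℝ)).sum

open intervalIntegral
open scoped Pointwise

theorem IntervalIntegrable.integral_mul_integral {f g : ℝ → ℝ} {a b : ℝ}
    (hf : IntervalIntegrable f volume a b) (hg : IntervalIntegrable g volume a b) :
    (∫ x in a..b, f x) * (∫ x in a..b, g x)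
      = ∫ t in a..b, f t * (∫ s in a..t, g s) + (∫ s in a..t, f s) * g t := by
  have hF := hf.absolutelyContinuousOnInterval_intervalIntegral left_mem_uIcc
  have hG := hg.absolutelyContinuousOnInterval_intervalIntegral left_mem_uIcc
  rw [← sub_zero ((∫ x in a..b, f x) * _), ← zero_mul (∫ s in a..a, g s), ← integral_same (f := f),
    ← hF.integral_deriv_mul_eq_sub hG]
  refine integral_congr_ae ?_
  filter_upwards [hf.ae_hasDerivAt_integral, hg.ae_hasDerivAt_integral] with t hft hgt ht
  rw [(hft (uIoc_subset_uIcc ht) a left_mem_uIcc).deriv,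
    (hgt (uIoc_subset_uIcc ht) a left_mem_uIcc).deriv, mul_comm]

theorem IntervalIntegrable.multiset_sum {ι : Type*} {a b : ℝ} {f : ι → ℝ → ℝ} (s : Multiset ι)
    (hf : ∀ i ∈ s, IntervalIntegrable (f i) volume a b) :
    IntervalIntegrable (fun x => (s.map fun i => f i x).sum) volume a b := by
  induction s using Multiset.induction_on with
  | empty => simp
  | cons i s ih =>
    simpa using (hf i (Multiset.mem_cons_self i s)).add
      (ih fun j hj => hf j (Multiset.mem_cons_of_mem hj))

theorem intervalIntegral.integral_multiset_sum {ι : Type*} {a b : ℝ} {f : ι → ℝ → ℝ}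
    (s : Multiset ι) (hf : ∀ i ∈ s, IntervalIntegrable (f i) volume a b) :
    ∫ x in a..b, (s.map fun i => f i x).sum = (s.map fun i => ∫ x in a..b, f i x).sum := by
  induction s using Multiset.induction_on with
  | empty => simp
  | cons i s ih =>
    have hs : ∀ j ∈ s, IntervalIntegrable (f j) volume a b :=
      fun j hj => hf j (Multiset.mem_cons_of_mem hj)
    simp only [Multiset.map_cons, Multiset.sum_cons]
    rw [integral_add (hf i (Multiset.mem_cons_self i s)) (IntervalIntegrable.multiset_sum s hs),
      ih hs]

section IteratedIntegrals

variable {d : ℕ} {X : ℝ → Fin d → ℝ} {a b : ℝ}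

theorem continuousOn_iterInt (hX : ∀ i, IntervalIntegrable (deriv fun s => X s i) volume a b)
    (w : List (Fin d)) : ContinuousOn (iterInt X a w) (uIcc a b) := by
  induction w with
  | nil => exact continuousOn_const
  | cons i w ih => exact continuousOn_primitive_interval' ((hX i).continuousOn_mul ih) left_mem_uIcc

theorem intervalIntegrable_iterInt_mul_deriv
    (hX : ∀ i, IntervalIntegrable (deriv fun s => X s i) volume a b) (w : List (Fin d)) (i : Fin d) :
    IntervalIntegrable (fun s => iterInt X a w s * deriv (fun s => X s i) s) volume a b :=
  (hX i).continuousOn_mul (continuousOn_iterInt hX w)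

theorem iterInt_mul_iterInt (hX : ∀ i, IntervalIntegrable (deriv fun s => X s i) volume a b)
    (u v : List (Fin d)) {t : ℝ} (ht : t ∈ uIcc a b) :
    iterInt X a u t * iterInt X a v t = ((shuffles u v).map fun w => iterInt X a w t).sum := by
  induction u, v using shuffles.induct generalizing t with
  | case1 v => simp [shuffles.eq_1, iterInt]
  | case2 u hu => simp [shuffles.eq_2 u hu, iterInt]
  | case3 i u j v ihl ihr =>
    have hsub : uIcc a t ⊆ uIcc a b := uIcc_subset_uIcc_left ht
    have hint : ∀ w k, IntervalIntegrable (fun s => iterInt X a w s * deriv (fun s => X s k) s)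
        volume a t := fun w k => (intervalIntegrable_iterInt_mul_deriv hX w k).mono_set hsub
    calc iterInt X a (i :: u) t * iterInt X a (j :: v) t
        = ∫ s in a..t, iterInt X a u s * deriv (fun s => X s i) s * iterInt X a (j :: v) s
            + iterInt X a (i :: u) s * (iterInt X a v s * deriv (fun s => X s j) s) :=
          (hint u i).integral_mul_integral (hint v j)
      _ = ∫ s in a..t,
            ((shuffles u (j :: v)).map fun w => iterInt X a w s * deriv (fun s => X s i) s).sum
            + ((shuffles (i :: u) v).map fun w => iterInt X a w s * deriv (fun s => X s j) s).sum := by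
          refine integral_congr fun s hs => ?_
          rw [Multiset.sum_map_mul_right, Multiset.sum_map_mul_right, ← ihl (hsub hs),
            ← ihr (hsub hs)]
          ring
      _ = ((shuffles (i :: u) (j :: v)).map fun w => iterInt X a w t).sum := by
          rw [integral_add (.multiset_sum _ fun w _ => hint w i) (.multiset_sum _ fun w _ => hint w j),
            integral_multiset_sum _ fun w _ => hint w i, integral_multiset_sum _ fun w _ => hint w j,
            shuffles.eq_3, Multiset.map_add, Multiset.sum_add, Multiset.map_map, Multiset.map_map]
          rfl

end IteratedIntegrals

theorem Subalgebra.pi_single_one_mem {ι K : Type*} [Fintype ι] [DecidableEq ι] [Field K]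
    (A : Subalgebra K (ι → K)) (hA : ∀ i j, i ≠ j → ∃ f ∈ A, f i ≠ f j) (i : ι) :
    Pi.single i 1 ∈ A := by
  have hsep : ∀ j, ∃ f ∈ A, j ≠ i → f i ≠ f j := fun j => by
    by_cases hj : j = i
    · exact ⟨1, A.one_mem, fun h => (h hj).elim⟩
    · obtain ⟨f, hf, hne⟩ := hA i j (Ne.symm hj)
      exact ⟨f, hf, fun _ => hne⟩
  choose f hfA hf using hsep
  have hprod : ∏ j ∈ Finset.univ.erase i, (f j i - f j j)⁻¹ • (f j - algebraMap K _ (f j j))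
      = Pi.single i 1 := by
    funext k
    simp only [Finset.prod_apply, Pi.smul_apply, Pi.sub_apply, Pi.algebraMap_apply,
      Algebra.algebraMap_self, RingHom.id_apply, smul_eq_mul]
    by_cases hk : k = i
    · subst hk
      rw [Pi.single_eq_same]
      exact Finset.prod_eq_one fun j hj =>
        inv_mul_cancel₀ (sub_ne_zero.mpr (hf j (Finset.ne_of_mem_erase hj)))
    · rw [Pi.single_eq_of_ne hk]
      exact Finset.prod_eq_zero (Finset.mem_erase.mpr ⟨hk, Finset.mem_univ k⟩) (by simp)
  rw [← hprod]
  exact Subalgebra.prod_mem _ fun j _ =>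
    A.smul_mem (A.sub_mem (hfA j) (A.algebraMap_mem _)) _

theorem exists_finsupp_sum_mul_eq_ite {ι W K : Type*} [Fintype ι] [DecidableEq ι] [Field K]
    {y : ι → W → K} (hy : Function.Injective y) (hone : ∃ e, ∀ j, y j e = 1)
    (hmul : ∀ u v, ∃ s : Multiset W, ∀ j, y j u * y j v = (s.map (y j)).sum) (i : ι) :
    ∃ c : W →₀ K, ∀ j, (c.sum fun w r => r * y j w) = if i = j then 1 else 0 := by
  set Ψ : W → ι → K := fun w j => y j w
  have hspan_mul : range Ψ * range Ψ ⊆ (Submodule.span K (range Ψ) : Set (ι → K)) := by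
    rintro _ ⟨_, ⟨u, rfl⟩, _, ⟨v, rfl⟩, rfl⟩
    obtain ⟨s, hs⟩ := hmul u v
    have : Ψ u * Ψ v = (s.map Ψ).sum := funext fun j => by
      rw [Pi.multiset_sum_apply, Multiset.map_map]; exact hs j
    simp only [SetLike.mem_coe, this]
    exact multiset_sum_mem _ fun z hz => by
      obtain ⟨w, -, rfl⟩ := Multiset.mem_map.mp hz
      exact Submodule.subset_span (mem_range_self w)
  let A : Subalgebra K (ι → K) := (Submodule.span K (range Ψ)).toSubalgebra
    (by obtain ⟨e, he⟩ := hone; exact Submodule.subset_span ⟨e, funext he⟩)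
    (fun f g hf hg => by
      have := Submodule.mul_mem_mul hf hg
      rw [Submodule.span_mul_span] at this
      exact Submodule.span_le.mpr hspan_mul this)
  have hsep : ∀ i j, i ≠ j → ∃ f ∈ A, f i ≠ f j := fun i j hij => by
    obtain ⟨w, hw⟩ := Function.ne_iff.mp (hy.ne hij)
    exact ⟨Ψ w, Submodule.subset_span (mem_range_self w), hw⟩
  obtain ⟨c, hc⟩ := Finsupp.mem_span_range_iff_exists_finsupp.mp (A.pi_single_one_mem hsep i)
  refine ⟨c, fun j => ?_⟩
  simpa [Finsupp.sum, Finset.sum_apply, Pi.single_apply, eq_comm] using congrFun hc j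

theorem IsSignature.apply_nil {d : ℕ} {x : List (Fin d) → ℝ} (hx : IsSignature x) : x [] = 1 := by
  obtain ⟨X, a, b, -, -, -, rfl⟩ := hx
  rfl

theorem IsSignature.mul_eq_sum_shuffles {d : ℕ} {x : List (Fin d) → ℝ} (hx : IsSignature x)
    (u v : List (Fin d)) :
    x u * x v = ((shuffles u.reverse v.reverse).map fun w => x w.reverse).sum := by
  obtain ⟨X, a, b, hab, -, hBV, rfl⟩ := hx
  have hX : ∀ i, IntervalIntegrable (deriv fun s => X s i) volume a b := fun i =>
    BoundedVariationOn.intervalIntegrable_deriv <| by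
      rw [uIcc_of_le hab]
      exact (LipschitzWith.eval i).comp_boundedVariationOn hBV
  simpa [Sig, sigCoord] using iterInt_mul_iterInt hX u.reverse v.reverse right_mem_uIcc

noncomputable def formEvalLinearMap {d : ℕ} (f : List (Fin d) →₀ ℝ) :
    (List (Fin d) → ℝ) →ₗ[ℝ] ℝ where
  toFun := formEval f
  map_add' x y := by simp [formEval, mul_add, Finsupp.sum_add]
  map_smul' r x := by simp [formEval, Finsupp.mul_sum, mul_left_comm]

/-- pairwise distinct signatures can be separated by linear forms on the
tensor algebra. -/
theorem separating_forms {d n : ℕ} (x : Fin n → (List (Fin d) → ℝ))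
    (hsig : ∀ i, IsSignature (x i)) (hdist : ∀ i j, i ≠ j → x i ≠ x j) :
    ∀ i, ∃ L : (List (Fin d) → ℝ) →ₗ[ℝ] ℝ, ∀ j, L (x j) = if i = j then 1 else 0 := by
  intro i
  have hinj : Function.Injective x := fun j k hjk => by_contra fun hne => hdist j k hne hjk
  have hshuffle : ∀ u v, ∃ s : Multiset (List (Fin d)),
      ∀ j, x j u * x j v = (s.map (x j)).sum := fun u v =>
    ⟨(shuffles u.reverse v.reverse).map List.reverse, fun j => by
      rw [Multiset.map_map]
      exact (hsig j).mul_eq_sum_shuffles u v⟩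
  obtain ⟨c, hc⟩ :=
    exists_finsupp_sum_mul_eq_ite hinj ⟨[], fun j => (hsig j).apply_nil⟩ hshuffle i
  exact ⟨formEvalLinearMap c, hc⟩
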